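/- (Saddle-point property) Suppose σ̄ ≥ 0, G(σ̄) = Q + σ̄L₀ is positive definite, x̄ = G(σ̄)⁻¹c satisfies x̄ᵀL₀x̄ ≤ 0, and σ̄ · (x̄ᵀL₀x̄) = 0. Then (x̄, σ̄) is a saddle point of the total complementary function Ξ on ℝⁿ × [0, ∞): for every x ∈ ℝⁿ and every σ ≥ 0, Ξ(x̄, σ) ≤ Ξ(x̄, σ̄) ≤ Ξ(x, σ̄). -/

import Mathlib

open Matrix

/-- The Lorentz matrix `L₀ = diag(−1, I_{n−1})`. -/
noncomputable def L0 (n : ℕ) [NeZero n] : Matrix (Fin n) (Fin n) ℝ :=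
  Matrix.diagonal (fun i => if i = 0 then (-1 : ℝ) else 1)

/-- The Lorentz cone `C = {x : ‖x₂‖ ≤ x₁, x₁ > 0}`, with the Euclidean norm of the
tail written as the square root of the sum of squares. -/
noncomputable def lorentzCone (n : ℕ) [NeZero n] : Set (Fin n → ℝ) :=
  {x | Real.sqrt (∑ i ∈ Finset.univ \ {(0 : Fin n)}, (x i) ^ 2) ≤ x 0 ∧ 0 < x 0}

/-- The primal objective `P(x) = ½ xᵀQx − cᵀx`. -/
noncomputable def Pobj (n : ℕ) (Q : Matrix (Fin n) (Fin n) ℝ) (c : Fin n → ℝ)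
    (x : Fin n → ℝ) : ℝ :=
  (1 / 2) * (x ⬝ᵥ (Q *ᵥ x)) - c ⬝ᵥ x

/-- `G(σ) = Q + σ L₀`. -/
noncomputable def Gm (n : ℕ) [NeZero n] (Q : Matrix (Fin n) (Fin n) ℝ) (σ : ℝ) :
    Matrix (Fin n) (Fin n) ℝ :=
  Q + σ • L0 n

/-- The total complementary function `Ξ(x, σ) = ½ xᵀG(σ)x − cᵀx`. -/
noncomputable def Xi (n : ℕ) [NeZero n] (Q : Matrix (Fin n) (Fin n) ℝ) (c : Fin n → ℝ)
    (x : Fin n → ℝ) (σ : ℝ) : ℝ :=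
  (1 / 2) * (x ⬝ᵥ ((Gm n Q σ) *ᵥ x)) - c ⬝ᵥ x

/-- The canonical dual objective `P^d(σ) = −½ cᵀG(σ)⁻¹c`. -/
noncomputable def Pd (n : ℕ) [NeZero n] (Q : Matrix (Fin n) (Fin n) ℝ) (c : Fin n → ℝ)
    (σ : ℝ) : ℝ :=
  -(1 / 2) * (c ⬝ᵥ ((Gm n Q σ)⁻¹ *ᵥ c))

/-! `Ξ(x̄, σ)` is affine in `σ` with slope `½ x̄ᵀL₀x̄ ≤ 0`, and complementarity makes it equal
to `P(x̄)` at `σ̄`; this gives the first inequality. Since `G(σ̄)x̄ = c` and `G(σ̄) ≻ 0`,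
`x̄` minimises the convex quadratic `Ξ(·, σ̄)`, with gap `½ (x − x̄)ᵀG(σ̄)(x − x̄) ≥ 0`. -/

theorem Matrix.PosSemidef.quadratic_le_of_mulVec_eq {ι : Type*} [Fintype ι]
    {G : Matrix ι ι ℝ} (hG : G.PosSemidef) {c xbar : ι → ℝ} (hxbar : G *ᵥ xbar = c)
    (x : ι → ℝ) :
    (1 / 2) * (xbar ⬝ᵥ (G *ᵥ xbar)) - c ⬝ᵥ xbar ≤ (1 / 2) * (x ⬝ᵥ (G *ᵥ x)) - c ⬝ᵥ x := by
  have hsymm : ∀ u v : ι → ℝ, u ⬝ᵥ (G *ᵥ v) = v ⬝ᵥ (G *ᵥ u) := fun u v => by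
    rw [dotProduct_mulVec, ← mulVec_transpose, isHermitian_iff_isSymm.mp hG.isHermitian,
      dotProduct_comm]
  have hcx : ∀ u : ι → ℝ, c ⬝ᵥ u = xbar ⬝ᵥ (G *ᵥ u) := fun u => by
    rw [← hxbar, dotProduct_comm, hsymm]
  have hgap : (x - xbar) ⬝ᵥ (G *ᵥ (x - xbar)) =
      x ⬝ᵥ (G *ᵥ x) - 2 * (xbar ⬝ᵥ (G *ᵥ x)) + xbar ⬝ᵥ (G *ᵥ xbar) := by
    rw [mulVec_sub, sub_dotProduct, dotProduct_sub, dotProduct_sub, hsymm x xbar]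
    ring
  have hnonneg := hG.dotProduct_mulVec_nonneg (x - xbar)
  simp only [star_trivial] at hnonneg
  rw [hcx x, hcx xbar]
  linarith

theorem Xi_eq_Pobj_add {n : ℕ} [NeZero n] (Q : Matrix (Fin n) (Fin n) ℝ) (c x : Fin n → ℝ)
    (σ : ℝ) : Xi n Q c x σ = Pobj n Q c x + σ / 2 * (x ⬝ᵥ (L0 n *ᵥ x)) := by
  simp only [Xi, Pobj, Gm, add_mulVec, dotProduct_add, smul_mulVec, dotProduct_smul,
    smul_eq_mul]
  ring

theorem saddle_point_general {n : ℕ} [NeZero n]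
    (Q : Matrix (Fin n) (Fin n) ℝ) (c : Fin n → ℝ)
    (σbar : ℝ) (hG : (Gm n Q σbar).PosDef)
    (xbar : Fin n → ℝ) (hx : xbar = (Gm n Q σbar)⁻¹ *ᵥ c)
    (hfeas : xbar ⬝ᵥ ((L0 n) *ᵥ xbar) ≤ 0)
    (hcomp : σbar * (xbar ⬝ᵥ ((L0 n) *ᵥ xbar)) = 0) :
    ∀ (x : Fin n → ℝ) (σ : ℝ), 0 ≤ σ →
      Xi n Q c xbar σ ≤ Xi n Q c xbar σbar ∧ Xi n Q c xbar σbar ≤ Xi n Q c x σbar := by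
  intro x σ hσ
  refine ⟨?_, ?_⟩
  · rw [Xi_eq_Pobj_add, Xi_eq_Pobj_add]
    linarith [mul_nonpos_of_nonneg_of_nonpos hσ hfeas]
  · have hxbar : Gm n Q σbar *ᵥ xbar = c := by
      rw [hx, mulVec_mulVec, mul_nonsing_inv _ ((isUnit_iff_isUnit_det _).mp hG.isUnit),
        one_mulVec]
    exact hG.posSemidef.quadratic_le_of_mulVec_eq hxbar x

/-- Saddle-point property: if `σ̄ ≥ 0`, `G(σ̄) ≻ 0`, `x̄ = G(σ̄)⁻¹c`
satisfies `x̄ᵀL₀x̄ ≤ 0` and `σ̄ · (x̄ᵀL₀x̄) = 0`, then `(x̄, σ̄)` is a saddle point of `Ξ`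
on `ℝⁿ × [0, ∞)`. -/
theorem saddle_point {n : ℕ} [NeZero n] (hn : 2 ≤ n)
    (Q : Matrix (Fin n) (Fin n) ℝ) (hQ : Q.IsSymm) (c : Fin n → ℝ)
    (σbar : ℝ) (hσ : 0 ≤ σbar) (hG : (Gm n Q σbar).PosDef)
    (xbar : Fin n → ℝ) (hx : xbar = (Gm n Q σbar)⁻¹ *ᵥ c)
    (hfeas : xbar ⬝ᵥ ((L0 n) *ᵥ xbar) ≤ 0)
    (hcomp : σbar * (xbar ⬝ᵥ ((L0 n) *ᵥ xbar)) = 0) :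
    ∀ (x : Fin n → ℝ) (σ : ℝ), 0 ≤ σ →
      Xi n Q c xbar σ ≤ Xi n Q c xbar σbar ∧ Xi n Q c xbar σbar ≤ Xi n Q c x σbar :=
  saddle_point_general Q c σbar hG xbar hx hfeas hcomp
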